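/- arXiv:0809.3110 — 2 statements merged into one kernel-verified Lean document; each statement's English description precedes it below -/
import Mathlib

section
/- The induced homomorphism ψ : F/F₃ → ℍ (from the homomorphism Ψ sending α ↦ M(1,0,0), β ↦ M(0,1,0)) is an isomorphism between F/F₃ and the integer Heisenberg group. -/
/-! Common setup: free group on two generators, Heisenberg group of unipotent
upper-triangular 3×3 integer matrices, the Heisenberg invariant. -/

noncomputable section

open scoped commutatorElement

/-- The free group on two generators. -/
abbrev F : Type := FreeGroup Bool

/-- The generator `α` of the free group. -/
def Wα : F := FreeGroup.of false

/-- The generator `β` of the free group. -/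
def Wβ : F := FreeGroup.of true

/-- `F₃`, the third term of the lower central series `F₁ = F`, `F_{n+1} = [F, Fₙ]`
(Mathlib's `lowerCentralSeries` is 0-indexed). -/
abbrev F₃ : Subgroup F := (⊤ : Subgroup F).lowerCentralSeries 2

/-- `H = F/F₃`. -/
abbrev H : Type := F ⧸ F₃

/-- The unipotent upper-triangular matrix `M(a,b,c)`. -/
def Mmat (a b c : ℤ) : Matrix (Fin 3) (Fin 3) ℤ := !![1, a, c; 0, 1, b; 0, 0, 1]

theorem Mmat_mul (a b c a' b' c' : ℤ) :
    Mmat a b c * Mmat a' b' c' = Mmat (a + a') (b + b') (c + c' + a * b') := by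
  simp [Mmat, Matrix.mul_fin_three]; ring_nf; simp

theorem Mmat_zero : Mmat 0 0 0 = 1 := by
  simp [Mmat, Matrix.one_fin_three]

/-- `M(a,b,c)` as a unit of the matrix ring. -/
def Munit (a b c : ℤ) : (Matrix (Fin 3) (Fin 3) ℤ)ˣ :=
  ⟨Mmat a b c, Mmat (-a) (-b) (a * b - c),
    by rw [Mmat_mul]; rw [show a + -a = 0 by ring, show b + -b = 0 by ring,
      show c + (a*b - c) + a * (-b) = 0 by ring]; exact Mmat_zero,
    by rw [Mmat_mul]; rw [show -a + a = 0 by ring, show -b + b = 0 by ring,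
      show (a*b - c) + c + (-a) * b = 0 by ring]; exact Mmat_zero⟩

theorem Munit_mul (a b c a' b' c' : ℤ) :
    Munit a b c * Munit a' b' c' = Munit (a + a') (b + b') (c + c' + a * b') :=
  Units.ext (Mmat_mul a b c a' b' c')

theorem Munit_one : Munit 0 0 0 = 1 := Units.ext Mmat_zero

theorem Munit_inv (a b c : ℤ) : (Munit a b c)⁻¹ = Munit (-a) (-b) (a * b - c) :=
  Units.ext rfl

theorem Munit_congr {a b c a' b' c' : ℤ} (h1 : a = a') (h2 : b = b') (h3 : c = c') :
    Munit a b c = Munit a' b' c' := by subst h1; subst h2; subst h3; rfl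

/-- The integer Heisenberg group, as the subgroup of units of the `3×3` integer
matrix ring consisting of the unipotent upper-triangular matrices `M(a,b,c)`. -/
def Heis : Subgroup (Matrix (Fin 3) (Fin 3) ℤ)ˣ where
  carrier := {x | ∃ a b c : ℤ, x = Munit a b c}
  one_mem' := ⟨0, 0, 0, Munit_one.symm⟩
  mul_mem' := by
    rintro x y ⟨a, b, c, rfl⟩ ⟨a', b', c', rfl⟩
    exact ⟨_, _, _, Munit_mul a b c a' b' c'⟩
  inv_mem' := by
    rintro x ⟨a, b, c, rfl⟩
    exact ⟨_, _, _, Munit_inv a b c⟩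

/-- The homomorphism `Ψ : F → ℍ` with `Ψ(α) = M(1,0,0)` and `Ψ(β) = M(0,1,0)`. -/
def Ψ : F →* (Matrix (Fin 3) (Fin 3) ℤ)ˣ :=
  FreeGroup.lift fun x => if x then Munit 0 1 0 else Munit 1 0 0

theorem Ψ_mem (g : F) : Ψ g ∈ Heis := by
  induction g using FreeGroup.induction_on with
  | C1 => exact Heis.one_mem
  | of x => cases x <;> · show Ψ (FreeGroup.of _) ∈ Heis; rw [Ψ, FreeGroup.lift_apply_of]; exact ⟨_, _, _, rfl⟩
  | inv_of x hx => rw [map_inv]; exact Heis.inv_mem hx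
  | mul x y hx hy => rw [map_mul]; exact Heis.mul_mem hx hy

theorem Munit_commutator (a b c a' b' c' : ℤ) :
    ⁅Munit a b c, Munit a' b' c'⁆ = Munit 0 0 (a * b' - a' * b) := by
  rw [commutatorElement_def, Munit_inv, Munit_inv, Munit_mul, Munit_mul, Munit_mul]
  exact Munit_congr (by ring) (by ring) (by ring)

theorem Munit_central (z a b c : ℤ) : Munit 0 0 z * Munit a b c = Munit a b c * Munit 0 0 z := by
  rw [Munit_mul, Munit_mul]; exact Munit_congr (by ring) (by ring) (by ring)

theorem Heis_comm_central (g : F) (hg : g ∈ (⁅(⊤ : Subgroup F), ⊤⁆ : Subgroup F)) :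
    Ψ g ∈ Subgroup.centralizer (Heis : Set (Matrix (Fin 3) (Fin 3) ℤ)ˣ) := by
  have hle : (⁅(⊤ : Subgroup F), ⊤⁆ : Subgroup F) ≤
      Subgroup.comap Ψ (Subgroup.centralizer (Heis : Set (Matrix (Fin 3) (Fin 3) ℤ)ˣ)) := by
    rw [Subgroup.commutator_le]
    intro g₁ _ g₂ _
    rw [Subgroup.mem_comap, map_commutatorElement]
    obtain ⟨a, b, c, h1⟩ := Ψ_mem g₁
    obtain ⟨a', b', c', h2⟩ := Ψ_mem g₂
    rw [h1, h2, Munit_commutator]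
    rw [Subgroup.mem_centralizer_iff]
    rintro x ⟨p, q, r, rfl⟩
    exact (Munit_central _ _ _ _).symm
  exact hle hg

theorem F₃_le_ker : F₃ ≤ Ψ.ker := by
  show ⁅(⁅(⊤ : Subgroup F), ⊤⁆ : Subgroup F), ⊤⁆ ≤ Ψ.ker
  rw [Subgroup.commutator_le]
  intro g hg h _
  rw [MonoidHom.mem_ker, map_commutatorElement]
  have hc : Ψ h * Ψ g = Ψ g * Ψ h :=
    Subgroup.mem_centralizer_iff.mp (Heis_comm_central g hg) (Ψ h) (Ψ_mem h)
  rw [commutatorElement_def, ← hc]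
  group

/-- The induced homomorphism `ψ : H = F/F₃ → ℍ`. -/
def ψH : H →* Heis :=
  QuotientGroup.lift F₃ (Ψ.codRestrict Heis Ψ_mem)
    (fun g hg => by
      have : Ψ g = 1 := F₃_le_ker hg
      exact Subtype.ext (by simpa using this))

/-- The matrix of the image of `g ∈ H` in the Heisenberg group. -/
def mat (g : H) : Matrix (Fin 3) (Fin 3) ℤ := ((ψH g : (Matrix (Fin 3) (Fin 3) ℤ)ˣ) : Matrix (Fin 3) (Fin 3) ℤ)

/-- `a(g)`: the exponent sum of `α` in `g` (the `(0,1)` entry of the Heisenberg matrix). -/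
def aH (g : H) : ℤ := mat g 0 1

/-- `b(g)`: the exponent sum of `β` in `g` (the `(1,2)` entry of the Heisenberg matrix). -/
def bH (g : H) : ℤ := mat g 1 2

/-- The Heisenberg invariant `ν(g)` of `g ∈ H`: the exponent of the central element
`[α,β]` in the unique normal form `g = [α,β]^ν α^a β^b`. -/
def νH (g : H) : ℤ := mat g 0 2 - aH g * bH g

/-- `a(g)` for a word `g` in the free group. -/
def aF (g : F) : ℤ := aH (QuotientGroup.mk g)

/-- `b(g)` for a word `g` in the free group. -/
def bF (g : F) : ℤ := bH (QuotientGroup.mk g)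

/-- The Heisenberg invariant of a word in the free group: the Heisenberg invariant of its
image in `H = F/F₃`. -/
def νF (g : F) : ℤ := νH (QuotientGroup.mk g)

/-!
In `F/F₃` the commutator `γ = [α,β]` is central, so words `γ^c α^a β^b` multiply by the
Heisenberg law: moving `β^b` past `α^a'` costs `γ^(-a'b)`. Hence
`M(a,b,c) ↦ γ^(c-ab) α^a β^b` is a homomorphism `ℍ → F/F₃`. It inverts `ψ`: on `F/F₃`
the check is on the generators `α`, `β`, and on `ℍ` it is a matrix computation.
-/

section TwoStepNilpotent

variable {G : Type*} [Group G] {x y : G}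

theorem commutatorElement_zpow_right_of_commute (h : Commute ⁅x, y⁆ y) (b : ℤ) :
    ⁅x, y ^ b⁆ = ⁅x, y⁆ ^ b := by
  have hconj : x * y * x⁻¹ = ⁅x, y⁆ * y := by rw [commutatorElement_def]; group
  rw [commutatorElement_def, ← conj_zpow, hconj, h.mul_zpow]
  group

theorem commutatorElement_zpow_zpow_of_commute (hx : Commute ⁅x, y⁆ x) (hy : Commute ⁅x, y⁆ y)
    (a b : ℤ) : ⁅x ^ a, y ^ b⁆ = ⁅x, y⁆ ^ (a * b) := by
  have hyx : ⁅y ^ b, x⁆ = (⁅x, y⁆ ^ b)⁻¹ := by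
    rw [← commutatorElement_inv, commutatorElement_zpow_right_of_commute hy]
  have hcomm : Commute ⁅y ^ b, x⁆ x := by rw [hyx]; exact (hx.zpow_left b).inv_left
  rw [← commutatorElement_inv, commutatorElement_zpow_right_of_commute hcomm, hyx, inv_zpow,
    inv_inv, ← zpow_mul, mul_comm]

def heisWord (x y : G) (a b c : ℤ) : G := ⁅x, y⁆ ^ c * x ^ a * y ^ b

theorem heisWord_mul (hx : Commute ⁅x, y⁆ x) (hy : Commute ⁅x, y⁆ y) (a b c a' b' c' : ℤ) :
    heisWord x y a b c * heisWord x y a' b' c' =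
      heisWord x y (a + a') (b + b') (c + c' - a' * b) := by
  have hswap : y ^ b * x ^ a' = ⁅x, y⁆ ^ (-(a' * b)) * x ^ a' * y ^ b := by
    rw [zpow_neg, ← commutatorElement_zpow_zpow_of_commute hx hy, commutatorElement_def]
    group
  set z := ⁅x, y⁆
  have hyz : Commute (y ^ b) (z ^ c') := (hy.zpow_zpow c' b).symm
  have hxz : Commute (x ^ a) (z ^ (c' - a' * b)) := (hx.zpow_zpow _ a).symm
  calc heisWord x y a b c * heisWord x y a' b' c'
      = z ^ c * x ^ a * (y ^ b * z ^ c') * x ^ a' * y ^ b' := by simp only [heisWord, z]; group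
    _ = z ^ c * x ^ a * z ^ c' * (y ^ b * x ^ a') * y ^ b' := by rw [hyz.eq]; group
    _ = z ^ c * (x ^ a * z ^ (c' - a' * b)) * x ^ a' * y ^ b * y ^ b' := by rw [hswap]; group
    _ = z ^ c * (z ^ (c' - a' * b) * x ^ a) * x ^ a' * y ^ b * y ^ b' := by rw [hxz.eq]
    _ = heisWord x y (a + a') (b + b') (c + c' - a' * b) := by simp only [heisWord, z]; group

theorem map_heisWord {K : Type*} [Group K] (f : G →* K) (x y : G) (a b c : ℤ) :
    f (heisWord x y a b c) = heisWord (f x) (f y) a b c := by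
  simp only [heisWord, map_mul, map_zpow, map_commutatorElement]

end TwoStepNilpotent

theorem commute_mk_of_mem_lowerCentralSeries {G : Type*} [Group G] {n : ℕ} {g : G}
    (hg : g ∈ (⊤ : Subgroup G).lowerCentralSeries n) (k : G) :
    Commute (g : G ⧸ (⊤ : Subgroup G).lowerCentralSeries (n + 1)) k := by
  rw [← commutatorElement_eq_one_iff_commute, ← QuotientGroup.mk'_apply, ← QuotientGroup.mk'_apply,
    ← map_commutatorElement, QuotientGroup.mk'_apply, QuotientGroup.eq_one_iff]
  exact Subgroup.commutator_mem_commutator hg (Subgroup.mem_top k)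

theorem commute_commutatorElement_Wα_Wβ (k : F) : Commute ⁅(Wα : H), (Wβ : H)⁆ k := by
  rw [← QuotientGroup.mk'_apply, ← QuotientGroup.mk'_apply, ← map_commutatorElement,
    QuotientGroup.mk'_apply]
  exact commute_mk_of_mem_lowerCentralSeries
    (Subgroup.commutator_mem_commutator (Subgroup.mem_top Wα) (Subgroup.mem_top Wβ)) k

@[simp] theorem Munit_apply_zero_one (a b c : ℤ) :
    (Munit a b c : Matrix (Fin 3) (Fin 3) ℤ) 0 1 = a := rfl

@[simp] theorem Munit_apply_one_two (a b c : ℤ) :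
    (Munit a b c : Matrix (Fin 3) (Fin 3) ℤ) 1 2 = b := rfl

@[simp] theorem Munit_apply_zero_two (a b c : ℤ) :
    (Munit a b c : Matrix (Fin 3) (Fin 3) ℤ) 0 2 = c := rfl

theorem Munit_zpow_of_mul_eq_zero {a b : ℤ} (c : ℤ) (h : a * b = 0) (n : ℤ) :
    Munit a b c ^ n = Munit (n * a) (n * b) (n * c) := by
  induction n using Int.induction_on with
  | zero => simpa using Munit_one.symm
  | succ n ih =>
    rw [zpow_add_one, ih, Munit_mul]
    exact Munit_congr (by ring) (by ring) (by linear_combination (n : ℤ) * h)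
  | pred n ih =>
    rw [zpow_sub_one, ih, Munit_inv, Munit_mul]
    exact Munit_congr (by ring) (by ring) (by linear_combination (n + 1 : ℤ) * h)

theorem heisWord_Munit (a b c : ℤ) :
    heisWord (Munit 1 0 0) (Munit 0 1 0) a b c = Munit a b (c + a * b) := by
  rw [heisWord, Munit_commutator, Munit_zpow_of_mul_eq_zero _ (by ring),
    Munit_zpow_of_mul_eq_zero _ (by ring), Munit_zpow_of_mul_eq_zero _ (by ring), Munit_mul,
    Munit_mul]
  exact Munit_congr (by ring) (by ring) (by ring)

theorem ψH_Wα : (ψH Wα : (Matrix (Fin 3) (Fin 3) ℤ)ˣ) = Munit 1 0 0 := by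
  show Ψ Wα = _
  simp [Ψ, Wα]

theorem ψH_Wβ : (ψH Wβ : (Matrix (Fin 3) (Fin 3) ℤ)ˣ) = Munit 0 1 0 := by
  show Ψ Wβ = _
  simp [Ψ, Wβ]

def ofHeis : Heis →* H where
  toFun x := heisWord (Wα : H) Wβ (x.1.1 0 1) (x.1.1 1 2) (x.1.1 0 2 - x.1.1 0 1 * x.1.1 1 2)
  map_one' := by
    rw [OneMemClass.coe_one, ← Munit_one]
    simp only [Munit_apply_zero_one, Munit_apply_one_two, Munit_apply_zero_two, heisWord,
      mul_zero, sub_zero, zpow_zero, mul_one]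
  map_mul' := by
    rintro ⟨_, a, b, c, rfl⟩ ⟨_, a', b', c', rfl⟩
    simp only [Subgroup.coe_mul, Munit_mul, Munit_apply_zero_one, Munit_apply_one_two,
      Munit_apply_zero_two]
    rw [heisWord_mul (commute_commutatorElement_Wα_Wβ Wα) (commute_commutatorElement_Wα_Wβ Wβ)]
    congr 1
    ring

theorem ofHeis_apply_of_coe_eq {x : Heis} {a b c : ℤ}
    (hx : (x : (Matrix (Fin 3) (Fin 3) ℤ)ˣ) = Munit a b c) :
    ofHeis x = heisWord (Wα : H) Wβ a b (c - a * b) := by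
  show heisWord (Wα : H) Wβ (x.1.1 0 1) (x.1.1 1 2) (x.1.1 0 2 - x.1.1 0 1 * x.1.1 1 2) = _
  rw [hx, Munit_apply_zero_one, Munit_apply_one_two, Munit_apply_zero_two]

theorem ofHeis_comp_ψH : ofHeis.comp ψH = MonoidHom.id H := by
  refine QuotientGroup.monoidHom_ext _ (FreeGroup.ext_hom _ _ fun i => ?_)
  cases i
  · show ofHeis (ψH Wα) = Wα
    rw [ofHeis_apply_of_coe_eq ψH_Wα, heisWord, mul_zero, sub_zero, zpow_zero, zpow_zero,
      zpow_one, one_mul, mul_one]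
  · show ofHeis (ψH Wβ) = Wβ
    rw [ofHeis_apply_of_coe_eq ψH_Wβ, heisWord, zero_mul, sub_zero, zpow_zero, zpow_zero,
      zpow_one, one_mul, one_mul]

theorem ψH_ofHeis (x : Heis) : ψH (ofHeis x) = x := by
  obtain ⟨_, a, b, c, rfl⟩ := x
  apply Subtype.ext
  show (Heis.subtype.comp ψH) (heisWord (Wα : H) Wβ a b (c - a * b)) = Munit a b c
  rw [map_heisWord, MonoidHom.comp_apply, MonoidHom.comp_apply, Subgroup.subtype_apply,
    Subgroup.subtype_apply, ψH_Wα, ψH_Wβ, heisWord_Munit, sub_add_cancel]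

/-- the homomorphism `ψ : F/F₃ → ℍ` induced by `Ψ` (with
`α ↦ M(1,0,0)`, `β ↦ M(0,1,0)`) is an isomorphism onto the integer Heisenberg group. -/
theorem statement_3 : Function.Bijective ψH :=
  Function.bijective_iff_has_inverse.mpr
    ⟨ofHeis, DFunLike.congr_fun ofHeis_comp_ψH, ψH_ofHeis⟩

end
end

section
/- Let g be a word of length n in α, α⁻¹, β, β⁻¹ with a(g) = b(g) = 0. If ν(g) = (n/4)², then n_α = n_β = n/4 and g is conjugate in F (equivalently its image in H equals, up to conjugation and free reduction) to the commutator [α^{n/4}, β^{n/4}]. -/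
/-! Common setup: free group on two generators, Heisenberg group of unipotent
upper-triangular 3×3 integer matrices, the Heisenberg invariant. -/

noncomputable section

open scoped commutatorElement

/-! Words in the letters α, α⁻¹, β, β⁻¹ and foldings (RNA secondary structures). -/

/-- A letter is a pair `(x, s)` (the `FreeGroup` convention): `s = true` for a generator,
`s = false` for its inverse. -/
abbrev Letter : Type := Bool × Bool

/-- A word in the letters `α`, `α⁻¹`, `β`, `β⁻¹`. -/
abbrev Word : Type := List Letter

/-- The letter `α`. -/
def lα : Letter := (false, true)
/-- The letter `α⁻¹`. -/
def lαinv : Letter := (false, false)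
/-- The letter `β`. -/
def lβ : Letter := (true, true)
/-- The letter `β⁻¹`. -/
def lβinv : Letter := (true, false)

/-- The exponent sum of `α` in a word: #`α` − #`α⁻¹`. -/
def aw (w : Word) : ℤ := (w.count lα : ℤ) - (w.count lαinv : ℤ)

/-- The exponent sum of `β` in a word: #`β` − #`β⁻¹`. -/
def bw (w : Word) : ℤ := (w.count lβ : ℤ) - (w.count lβinv : ℤ)

/-- The cyclic subword `w(i,j)` strictly between positions `i` and `j` (`0`-indexed),
read counterclockwise: if `i < j` it is `l_{i+1} ⋯ l_{j-1}`, and if `i > j` it is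
`l_{i+1} ⋯ l_n l_1 ⋯ l_{j-1}` (0-indexed: wraps around the end). -/
def between (w : Word) (i j : ℕ) : Word :=
  if i < j then (w.drop (i + 1)).take (j - i - 1) else w.drop (i + 1) ++ w.take j

/-- A folding (RNA secondary structure without pseudo-knots) of the cyclic word `w`:
a collection of disjoint pairs `(i,j)` of positions with `l_i ∈ {α, β}` and `l_j` the
inverse letter, subject to the non-nesting (no pseudo-knot) condition. -/
structure Folding (w : Word) where
  /-- The set of paired positions. -/
  pairs : Finset (Fin w.length × Fin w.length)
  ne : ∀ p ∈ pairs, p.1 ≠ p.2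
  matched : ∀ p ∈ pairs,
    (w.get p.1 = lα ∧ w.get p.2 = lαinv) ∨ (w.get p.1 = lβ ∧ w.get p.2 = lβinv)
  disjoint : ∀ p ∈ pairs, ∀ q ∈ pairs, p ≠ q →
    p.1 ≠ q.1 ∧ p.1 ≠ q.2 ∧ p.2 ≠ q.1 ∧ p.2 ≠ q.2
  nonnested : ∀ p ∈ pairs, ∀ q ∈ pairs,
    (p.1 < q.1 ∧ q.1 < p.2 → p.1 < q.2 ∧ q.2 < p.2) ∧
    (p.2 < q.1 ∧ q.1 < p.1 → p.2 < q.2 ∧ q.2 < p.1)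

/-- A complete `α`-folding: every pair is an `α`-pair and every occurrence of the
letter `α` is paired. -/
def Folding.IsCompleteAlpha {w : Word} (𝓕 : Folding w) : Prop :=
  (∀ p ∈ 𝓕.pairs, w.get p.1 = lα) ∧
    ∀ i : Fin w.length, w.get i = lα → ∃ p ∈ 𝓕.pairs, p.1 = i


/-! Read a word as a closed walk in `ℤ²`: `α^{±1}` moves the first coordinate by `±1`, `β^{±1}`
the second. When `a = b = 0`, `ν` is the signed area `∑ⱼ yⱼ Xⱼ` enclosed by the walk, where `yⱼ`
is the second coordinate of the `j`-th step and `Xⱼ` the first coordinate of the point it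
starts from. As `∑ⱼ yⱼ = 0`, this area is at most half the number `N_β` of letters `β^{±1}`
times the width `max X - min X`, and the width is at most `N_α / 2`. Hence
`16 ν ≤ 4 N_α N_β ≤ (N_α + N_β)² = n²`. Equality forces `N_α = N_β`, a width of `n/4`, and
`β`-steps only on the right and `β⁻¹`-steps only on the left side of the bounding box; after a
quarter turn of the plane the same holds for `α`. So the walk runs counterclockwise around
the boundary of a square of side `k = n/4`, and read from its lower left corner, which it must
visit, the word is `α^k β^k α^{-k} β^{-k}`. -/

open Finset Function

theorem isConj_mul_comm {G : Type*} [Group G] (a b : G) : IsConj (a * b) (b * a) :=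
  isConj_iff.2 ⟨b, by group⟩

theorem FreeGroup.isConj_mk_rotate {α : Type*} (L : List (α × Bool)) (r : ℕ) :
    IsConj (FreeGroup.mk (L.rotate r)) (FreeGroup.mk L) := by
  rw [List.rotate_eq_drop_append_take_mod, ← FreeGroup.mul_mk]
  conv_rhs => rw [← List.take_append_drop (r % L.length) L, ← FreeGroup.mul_mk]
  exact isConj_mul_comm _ _

theorem FreeGroup.mk_replicate {α : Type*} (x : α × Bool) (m : ℕ) :
    FreeGroup.mk (List.replicate m x) = FreeGroup.mk [x] ^ m := by
  rw [FreeGroup.pow_mk]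
  congr
  induction m with
  | zero => rfl
  | succ m ih => rw [List.replicate_succ, List.replicate_succ, List.flatten_cons, ih]; rfl

section OrderedRing

variable {ι R : Type*} [CommRing R]

theorem two_mul_sum_mul_eq_sum_mul {s : Finset ι} {c : ι → R} (a : ι → R)
    (hc : ∑ i ∈ s, c i = 0) (m M : R) :
    2 * ∑ i ∈ s, c i * a i = ∑ i ∈ s, c i * (2 * a i - (M + m)) := by
  simp only [mul_sub, sum_sub_distrib, ← sum_mul, hc, zero_mul, sub_zero, mul_sum]
  exact sum_congr rfl fun i _ => by ring

variable [LinearOrder R] [IsStrictOrderedRing R]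

theorem two_mul_sum_le_sum_abs {s t : Finset ι} {f : ι → R} (hst : s ⊆ t)
    (hf : ∑ i ∈ t, f i = 0) : 2 * ∑ i ∈ s, f i ≤ ∑ i ∈ t, |f i| := by
  classical
  have hsplit := sum_sdiff (f := f) hst
  have hsplitAbs := sum_sdiff (f := fun i => |f i|) hst
  have hs : ∑ i ∈ s, f i ≤ ∑ i ∈ s, |f i| := sum_le_sum fun i _ => le_abs_self _
  have hcompl : ∑ i ∈ t \ s, -f i ≤ ∑ i ∈ t \ s, |f i| :=
    sum_le_sum fun i _ => neg_le_abs _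
  rw [sum_neg_distrib] at hcompl
  linarith

theorem two_mul_sub_le_sum_abs {f : ℕ → R} {n s t : ℕ} (hf : ∑ i ∈ range n, f i = 0)
    (hs : s ≤ n) (ht : t ≤ n) :
    2 * (∑ i ∈ range t, f i - ∑ i ∈ range s, f i) ≤ ∑ i ∈ range n, |f i| := by
  rcases le_total s t with hst | hts
  · rw [← sum_Ico_eq_sub _ hst]
    exact two_mul_sum_le_sum_abs (fun i hi => by simp at hi ⊢; omega) hf
  · have h := two_mul_sum_le_sum_abs (f := fun i => -f i) (s := Ico t s) (t := range n)
      (fun i hi => by simp at hi ⊢; omega) (by rw [sum_neg_distrib, hf, neg_zero])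
    simp only [sum_neg_distrib, abs_neg, sum_Ico_eq_sub _ hts] at h
    linarith

theorem mul_two_mul_sub_le (c : R) {a m M : R} (hm : m ≤ a) (hM : a ≤ M) :
    c * (2 * a - (M + m)) ≤ |c| * (M - m) :=
  calc c * (2 * a - (M + m)) ≤ |c * (2 * a - (M + m))| := le_abs_self _
    _ = |c| * |2 * a - (M + m)| := abs_mul _ _
    _ ≤ |c| * (M - m) :=
      mul_le_mul_of_nonneg_left (abs_le.2 ⟨by linarith, by linarith⟩) (abs_nonneg c)

variable {s : Finset ι} {c a : ι → R} {m M : R}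

theorem two_mul_sum_mul_le (hc : ∑ i ∈ s, c i = 0) (ha : ∀ i ∈ s, m ≤ a i ∧ a i ≤ M) :
    2 * ∑ i ∈ s, c i * a i ≤ (∑ i ∈ s, |c i|) * (M - m) := by
  rw [two_mul_sum_mul_eq_sum_mul a hc m M, sum_mul]
  exact sum_le_sum fun i hi => mul_two_mul_sub_le _ (ha i hi).1 (ha i hi).2

theorem eq_of_two_mul_sum_mul_eq (hc : ∑ i ∈ s, c i = 0) (ha : ∀ i ∈ s, m ≤ a i ∧ a i ≤ M)
    (heq : 2 * ∑ i ∈ s, c i * a i = (∑ i ∈ s, |c i|) * (M - m)) :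
    ∀ i ∈ s, (0 < c i → a i = M) ∧ (c i < 0 → a i = m) := by
  have hzero : ∑ i ∈ s, (|c i| * (M - m) - c i * (2 * a i - (M + m))) = 0 := by
    rw [sum_sub_distrib, ← sum_mul, ← heq, two_mul_sum_mul_eq_sum_mul a hc m M, sub_self]
  rw [sum_eq_zero_iff_of_nonneg fun i hi =>
    sub_nonneg.2 (mul_two_mul_sub_le _ (ha i hi).1 (ha i hi).2)] at hzero
  intro i hi
  have h := hzero i hi
  constructor
  · intro hpos
    rw [abs_of_pos hpos] at h
    have h' : c i * (2 * (M - a i)) = 0 := by linear_combination h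
    linarith [(mul_eq_zero.1 h').resolve_left hpos.ne']
  · intro hneg
    rw [abs_of_neg hneg] at h
    have h' : c i * (2 * (a i - m)) = 0 := by linear_combination -h
    linarith [(mul_eq_zero.1 h').resolve_left hneg.ne]

end OrderedRing

theorem letter_cases (l : Letter) : l = lα ∨ l = lαinv ∨ l = lβ ∨ l = lβinv := by
  rcases l with ⟨_ | _, _ | _⟩ <;> simp [lα, lαinv, lβ, lβinv]

def xStep : Letter → ℤ
  | (false, true) => 1
  | (false, false) => -1
  | (true, _) => 0

def yStep : Letter → ℤ
  | (true, true) => 1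
  | (true, false) => -1
  | (false, _) => 0

@[simp] theorem xStep_lα : xStep lα = 1 := rfl
@[simp] theorem xStep_lαinv : xStep lαinv = -1 := rfl
@[simp] theorem xStep_lβ : xStep lβ = 0 := rfl
@[simp] theorem xStep_lβinv : xStep lβinv = 0 := rfl
@[simp] theorem yStep_lα : yStep lα = 0 := rfl
@[simp] theorem yStep_lαinv : yStep lαinv = 0 := rfl
@[simp] theorem yStep_lβ : yStep lβ = 1 := rfl
@[simp] theorem yStep_lβinv : yStep lβinv = -1 := rfl

theorem abs_xStep_add_abs_yStep (l : Letter) : |xStep l| + |yStep l| = 1 := by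
  rcases letter_cases l with h | h | h | h <;> simp [h]

theorem xStep_mul_yStep (l : Letter) : xStep l * yStep l = 0 := by
  rcases letter_cases l with h | h | h | h <;> simp [h]

/-- The quarter turn `(x, y) ↦ (y, -x)` of the plane, acting on letters. -/
def quarterTurn : Letter → Letter
  | (false, s) => (true, !s)
  | (true, s) => (false, s)

theorem xStep_quarterTurn (l : Letter) : xStep (quarterTurn l) = yStep l := by
  rcases l with ⟨_ | _, _ | _⟩ <;> rfl

theorem yStep_quarterTurn (l : Letter) : yStep (quarterTurn l) = -xStep l := by
  rcases l with ⟨_ | _, _ | _⟩ <;> rfl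

section Walk

variable (l : ℕ → Letter)

def walkX (t : ℕ) : ℤ := ∑ j ∈ range t, xStep (l j)

def walkY (t : ℕ) : ℤ := ∑ j ∈ range t, yStep (l j)

def walkArea (t : ℕ) : ℤ := ∑ j ∈ range t, yStep (l j) * walkX l j

@[simp] theorem walkX_zero : walkX l 0 = 0 := sum_range_zero _
@[simp] theorem walkY_zero : walkY l 0 = 0 := sum_range_zero _

theorem walkX_succ (t : ℕ) : walkX l (t + 1) = walkX l t + xStep (l t) := sum_range_succ _ _
theorem walkY_succ (t : ℕ) : walkY l (t + 1) = walkY l t + yStep (l t) := sum_range_succ _ _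

theorem walkArea_succ (t : ℕ) : walkArea l (t + 1) = walkArea l t + yStep (l t) * walkX l t :=
  sum_range_succ _ _

theorem walkX_shift (r t : ℕ) : walkX (fun j => l (r + j)) t = walkX l (r + t) - walkX l r := by
  rw [walkX, walkX, walkX, sum_range_add]; ring

theorem walkY_shift (r t : ℕ) : walkY (fun j => l (r + j)) t = walkY l (r + t) - walkY l r := by
  rw [walkY, walkY, walkY, sum_range_add]; ring

variable {l}

theorem periodic_walkX {n : ℕ} (hl : Periodic l n) (h0 : walkX l n = 0) :
    Periodic (walkX l) n := fun t => by
  have h := walkX_shift l n t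
  rw [show (fun j => l (n + j)) = l from funext fun j => by rw [add_comm]; exact hl j] at h
  rw [add_comm, h, h0, sub_zero]

theorem periodic_walkY {n : ℕ} (hl : Periodic l n) (h0 : walkY l n = 0) :
    Periodic (walkY l) n := fun t => by
  have h := walkY_shift l n t
  rw [show (fun j => l (n + j)) = l from funext fun j => by rw [add_comm]; exact hl j] at h
  rw [add_comm, h, h0, sub_zero]

variable (l)

theorem walkArea_add_sum_xStep_mul_walkY (t : ℕ) :
    walkArea l t + ∑ j ∈ range t, xStep (l j) * walkY l j = walkX l t * walkY l t := by
  induction t with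
  | zero => simp [walkArea]
  | succ t ih =>
    rw [walkArea_succ, sum_range_succ, walkX_succ, walkY_succ]
    linear_combination ih - xStep_mul_yStep (l t)

theorem walkX_quarterTurn : walkX (quarterTurn ∘ l) = walkY l :=
  funext fun _ => sum_congr rfl fun j _ => xStep_quarterTurn (l j)

theorem walkY_quarterTurn (t : ℕ) : walkY (quarterTurn ∘ l) t = -walkX l t := by
  simp only [walkY, walkX, comp_apply, yStep_quarterTurn, sum_neg_distrib]

theorem walkArea_quarterTurn (t : ℕ) :
    walkArea (quarterTurn ∘ l) t = walkArea l t - walkX l t * walkY l t := by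
  have h := walkArea_add_sum_xStep_mul_walkY l t
  simp only [walkArea, walkX_quarterTurn, comp_apply, yStep_quarterTurn, neg_mul,
    sum_neg_distrib] at h ⊢
  linarith

end Walk

def cyclicLetter (w : Word) (j : ℕ) : Letter := w.getD (j % w.length) lα

theorem periodic_cyclicLetter (w : Word) : Periodic (cyclicLetter w) w.length := fun j => by
  simp only [cyclicLetter, Nat.add_mod_right]

theorem Ψ_mk_take (w : Word) {t : ℕ} (ht : t ≤ w.length) :
    Ψ (FreeGroup.mk (w.take t)) = Munit (walkX (cyclicLetter w) t) (walkY (cyclicLetter w) t)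
      (walkArea (cyclicLetter w) t) := by
  induction t with
  | zero =>
    rw [List.take_zero, walkX_zero, walkY_zero, walkArea, sum_range_zero, Munit_one]
    exact map_one Ψ
  | succ t ih =>
    have hletter : cyclicLetter w t = w[t] := by
      rw [cyclicLetter, Nat.mod_eq_of_lt ht, List.getD_eq_getElem]
    have hstep : Ψ (FreeGroup.mk [w[t]]) = Munit (xStep w[t]) (yStep w[t]) 0 := by
      rcases letter_cases w[t] with h | h | h | h <;>
        simp [h, Ψ, FreeGroup.lift_mk, lα, lαinv, lβ, lβinv, Munit_inv, xStep, yStep]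
    rw [List.take_add_one, List.getElem?_eq_getElem ht, Option.toList_some, ← FreeGroup.mul_mk,
      map_mul, ih (by omega), hstep, Munit_mul, walkX_succ, walkY_succ, walkArea_succ, hletter]
    exact Munit_congr rfl rfl (by ring)

theorem mat_mk (w : Word) :
    mat (QuotientGroup.mk (FreeGroup.mk w)) = Mmat (walkX (cyclicLetter w) w.length)
      (walkY (cyclicLetter w) w.length) (walkArea (cyclicLetter w) w.length) := by
  have h := Ψ_mk_take w le_rfl
  rw [List.take_length] at h
  exact congrArg Units.val h

section Extremal

variable {l : ℕ → Letter} {n : ℕ}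

theorem walk_extremal (hl : Periodic l n) (hn : 0 < n) (hX : walkX l n = 0)
    (hY : walkY l n = 0) (harea : 16 * walkArea l n = (n : ℤ) ^ 2) :
    ∃ m M : ℤ, 4 * (M - m) = n ∧ ∀ j, (m ≤ walkX l j ∧ walkX l j ≤ M) ∧
      (l j = lβ → walkX l j = M) ∧ (l j = lβinv → walkX l j = m) := by
  set M := (range (n + 1)).sup' nonempty_range_add_one (walkX l)
  set m := (range (n + 1)).inf' nonempty_range_add_one (walkX l)
  have hbox : ∀ t ∈ range n, m ≤ walkX l t ∧ walkX l t ≤ M := fun t ht =>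
    have ht' : t ∈ range (n + 1) := by simp at ht ⊢; omega
    ⟨inf'_le _ ht', le_sup' _ ht'⟩
  obtain ⟨t₁, ht₁, hM : M = walkX l t₁⟩ :=
    exists_mem_eq_sup' (nonempty_range_add_one (n := n)) (walkX l)
  obtain ⟨t₀, ht₀, hm : m = walkX l t₀⟩ :=
    exists_mem_eq_inf' (nonempty_range_add_one (n := n)) (walkX l)
  set NX := ∑ j ∈ range n, |xStep (l j)|
  set NY := ∑ j ∈ range n, |yStep (l j)|
  have hNX : 0 ≤ NX := sum_nonneg fun _ _ => abs_nonneg _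
  have hNY : 0 ≤ NY := sum_nonneg fun _ _ => abs_nonneg _
  have hlen : NX + NY = n := by
    simp only [NX, NY, ← sum_add_distrib, abs_xStep_add_abs_yStep, sum_const, card_range,
      nsmul_one]
  have hwidth : 2 * (M - m) ≤ NX := by
    rw [hM, hm]
    exact two_mul_sub_le_sum_abs hX (by simpa [Nat.lt_succ_iff] using ht₀)
      (by simpa [Nat.lt_succ_iff] using ht₁)
  have hsumY : ∑ j ∈ range n, yStep (l j) = 0 := hY
  have hle := two_mul_sum_mul_le hsumY hbox
  rw [← walkArea] at hle
  have hNXY : NX = NY := by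
    nlinarith [sq_nonneg (NX - NY), mul_le_mul_of_nonneg_left hwidth hNY]
  have hwidth' : 2 * (M - m) = NX := by
    nlinarith [mul_le_mul_of_nonneg_left hwidth hNY]
  have heq : 2 * walkArea l n = NY * (M - m) := by nlinarith
  refine ⟨m, M, by linarith, fun j => ?_⟩
  rw [← hl.map_mod_nat j, ← (periodic_walkX hl hX).map_mod_nat j]
  have hj : j % n ∈ range n := mem_range.2 (Nat.mod_lt j hn)
  have hext := eq_of_two_mul_sum_mul_eq hsumY hbox heq (j % n) hj
  exact ⟨hbox _ hj, fun h => hext.1 (by simp [h]), fun h => hext.2 (by simp [h])⟩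

end Extremal

/-- The walk stays in the square `[x₀, x₀ + k] × [y₀, y₀ + k]` and moves only along its
boundary, counterclockwise. -/
def BoundaryWalk (l : ℕ → Letter) (k : ℕ) (x₀ y₀ : ℤ) : Prop :=
  ∀ j, (x₀ ≤ walkX l j ∧ walkX l j ≤ x₀ + k ∧ y₀ ≤ walkY l j ∧ walkY l j ≤ y₀ + k) ∧
    (l j = lα → walkY l j = y₀) ∧ (l j = lβ → walkX l j = x₀ + k) ∧
    (l j = lαinv → walkY l j = y₀ + k) ∧ (l j = lβinv → walkX l j = x₀)

theorem boundaryWalk_of_area_eq {l : ℕ → Letter} {n : ℕ} (hl : Periodic l n) (hn : 0 < n)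
    (hX : walkX l n = 0) (hY : walkY l n = 0) (harea : 16 * walkArea l n = (n : ℤ) ^ 2) :
    ∃ k x₀ y₀, n = 4 * k ∧ BoundaryWalk l k x₀ y₀ := by
  obtain ⟨mX, MX, hnX, hXcond⟩ := walk_extremal hl hn hX hY harea
  obtain ⟨mY, MY, hnY, hYcond⟩ := walk_extremal (l := quarterTurn ∘ l) (hl.comp _) hn
    (by rw [walkX_quarterTurn, hY]) (by rw [walkY_quarterTurn, hX, neg_zero])
    (by rw [walkArea_quarterTurn, hX, zero_mul, sub_zero, harea])
  rw [walkX_quarterTurn] at hYcond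
  refine ⟨n / 4, mX, mY, by omega, fun j => ?_⟩
  obtain ⟨⟨hX₁, hX₂⟩, hβ, hβinv⟩ := hXcond j
  obtain ⟨⟨hY₁, hY₂⟩, hαinv, hα⟩ := hYcond j
  refine ⟨⟨hX₁, by omega, hY₁, by omega⟩, fun h => hα (by simp [h]; rfl), fun h => ?_,
    fun h => ?_, hβinv⟩
  · rw [hβ h]; omega
  · rw [hαinv (by simp [h]; rfl)]; omega

namespace BoundaryWalk

variable {l : ℕ → Letter} {k : ℕ} {x₀ y₀ : ℤ}

theorem shift (hW : BoundaryWalk l k x₀ y₀) (r : ℕ) :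
    BoundaryWalk (fun j => l (r + j)) k (x₀ - walkX l r) (y₀ - walkY l r) := by
  intro j
  obtain ⟨⟨h₁, h₂, h₃, h₄⟩, hα, hβ, hαinv, hβinv⟩ := hW (r + j)
  simp only [walkX_shift, walkY_shift]
  exact ⟨⟨by linarith, by linarith, by linarith, by linarith⟩, fun h => by linarith [hα h],
    fun h => by linarith [hβ h], fun h => by linarith [hαinv h], fun h => by linarith [hβinv h]⟩

/-- A position minimizing `X + Y` is entered by `β⁻¹` and left by `α`, hence is the lower left
corner. -/
theorem exists_corner (hW : BoundaryWalk l k x₀ y₀) (hk : 0 < k) {n : ℕ} (hn : 0 < n)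
    (hX : Periodic (walkX l) n) (hY : Periodic (walkY l) n) :
    ∃ r, walkX l r = x₀ ∧ walkY l r = y₀ := by
  obtain ⟨r, -, hmin⟩ := exists_min_image (range n) (fun j => walkX l j + walkY l j)
    (nonempty_range_iff.2 hn.ne')
  obtain ⟨s, hs⟩ : ∃ s, s + 1 = r + n := ⟨r + n - 1, by omega⟩
  have hglobal : ∀ j, walkX l (s + 1) + walkY l (s + 1) ≤ walkX l j + walkY l j := fun j => by
    rw [hs, hX r, hY r, ← hX.map_mod_nat j, ← hY.map_mod_nat j]
    exact hmin _ (mem_range.2 (Nat.mod_lt j hn))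
  have hin := hglobal s
  have hout := hglobal (s + 1 + 1)
  have hXs := walkX_succ l s
  have hYs := walkY_succ l s
  have hXs' := walkX_succ l (s + 1)
  have hYs' := walkY_succ l (s + 1)
  obtain ⟨⟨-, hs₂, -, -⟩, -, -, hsαinv, hsβinv⟩ := hW s
  obtain ⟨-, hα, hβ, -, -⟩ := hW (s + 1)
  have hprev : l s = lβinv := by
    rcases letter_cases (l s) with h | h | h | h <;> simp [h] at hXs hYs
    · omega
    · have := hsαinv h
      rcases letter_cases (l (s + 1)) with h' | h' | h' | h' <;> simp [h'] at hXs' hYs'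
      · have := hα h'; omega
      · omega
      · have := hβ h'; omega
      · omega
    · omega
    · exact h
  have hnext : l (s + 1) = lα := by
    have := hsβinv hprev
    simp only [hprev, xStep_lβinv, add_zero] at hXs
    rcases letter_cases (l (s + 1)) with h' | h' | h' | h' <;> simp [h'] at hXs' hYs'
    · exact h'
    · omega
    · have := hβ h'; omega
    · omega
  refine ⟨s + 1, ?_, hα hnext⟩
  rw [hXs, hsβinv hprev, hprev, xStep_lβinv, add_zero]

end BoundaryWalk

section Square

variable (k : ℕ)

def commLetter (u : ℕ) : Letter :=
  if u < k then lα else if u < 2 * k then lβ else if u < 3 * k then lαinv else lβinv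

def squareX (u : ℕ) : ℤ :=
  if u ≤ k then u else if u ≤ 2 * k then k else if u ≤ 3 * k then 3 * (k : ℤ) - u else 0

def squareY (u : ℕ) : ℤ :=
  if u ≤ k then 0 else if u ≤ 2 * k then (u : ℤ) - k else if u ≤ 3 * k then k
  else 4 * (k : ℤ) - u

variable {k}

theorem squareX_succ {u : ℕ} (hu : u < 4 * k) :
    squareX k (u + 1) = squareX k u + xStep (commLetter k u) := by
  simp only [squareX, commLetter]
  split_ifs <;> simp <;> omega

theorem squareY_succ {u : ℕ} (hu : u < 4 * k) :
    squareY k (u + 1) = squareY k u + yStep (commLetter k u) := by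
  simp only [squareY, commLetter]
  split_ifs <;> simp <;> omega

end Square

namespace BoundaryWalk

variable {l : ℕ → Letter} {k : ℕ}

/-- On the boundary of the square, the position determines the next letter. -/
theorem eq_commLetter_of_eq_square (hW : BoundaryWalk l k 0 0) {u : ℕ} (hu : u < 4 * k)
    (hX : walkX l u = squareX k u) (hY : walkY l u = squareY k u) : l u = commLetter k u := by
  obtain ⟨-, hα, hβ, hαinv, hβinv⟩ := hW u
  obtain ⟨⟨hX₁, hX₂, hY₁, hY₂⟩, -⟩ := hW (u + 1)
  rw [walkX_succ, hX] at hX₁ hX₂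
  rw [walkY_succ, hY] at hY₁ hY₂
  have hside : (l u = lα ∧ walkY l u = 0) ∨ (l u = lβ ∧ walkX l u = k) ∨
      (l u = lαinv ∧ walkY l u = k) ∨ (l u = lβinv ∧ walkX l u = 0) := by
    rcases letter_cases (l u) with h | h | h | h
    · exact Or.inl ⟨h, hα h⟩
    · exact Or.inr (Or.inr (Or.inl ⟨h, by simpa using hαinv h⟩))
    · exact Or.inr (Or.inl ⟨h, by simpa using hβ h⟩)
    · exact Or.inr (Or.inr (Or.inr ⟨h, hβinv h⟩))
  rw [hX, hY] at hside
  rcases hside with ⟨h, hside⟩ | ⟨h, hside⟩ | ⟨h, hside⟩ | ⟨h, hside⟩ <;>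
    rw [h] at hX₁ hX₂ hY₁ hY₂ ⊢ <;>
    simp only [commLetter, squareX, squareY, xStep_lα, xStep_lβ, xStep_lαinv, xStep_lβinv,
      yStep_lα, yStep_lβ, yStep_lαinv, yStep_lβinv] at hside hX₁ hX₂ hY₁ hY₂ ⊢ <;>
    split_ifs at hside hX₁ hX₂ hY₁ hY₂ ⊢ <;> first | rfl | omega

theorem eq_commLetter (hW : BoundaryWalk l k 0 0) {u : ℕ} (hu : u < 4 * k) :
    l u = commLetter k u := by
  have hpos : ∀ u ≤ 4 * k, walkX l u = squareX k u ∧ walkY l u = squareY k u := by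
    intro u
    induction u with
    | zero => simp [squareX, squareY]
    | succ u ih =>
      intro hu
      obtain ⟨hX, hY⟩ := ih (by omega)
      have hl := hW.eq_commLetter_of_eq_square (by omega) hX hY
      rw [walkX_succ, walkY_succ, hX, hY, hl, squareX_succ (by omega),
        squareY_succ (by omega)]
      exact ⟨rfl, rfl⟩
  exact hW.eq_commLetter_of_eq_square hu (hpos u hu.le).1 (hpos u hu.le).2

end BoundaryWalk

def commWord (k : ℕ) : Word :=
  List.replicate k lα ++ List.replicate k lβ ++ List.replicate k lαinv ++ List.replicate k lβinv

theorem length_commWord (k : ℕ) : (commWord k).length = 4 * k := by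
  simp [commWord]; ring

theorem getElem_commWord {k u : ℕ} (hu : u < (commWord k).length) :
    (commWord k)[u] = commLetter k u := by
  simp only [commWord, List.getElem_append, List.getElem_replicate, List.length_append,
    List.length_replicate, commLetter]
  split_ifs <;> first | rfl | omega

theorem count_lα_commWord (k : ℕ) : (commWord k).count lα = k := by
  simp [commWord, List.count_replicate, lα, lβ, lαinv, lβinv]

theorem count_lβ_commWord (k : ℕ) : (commWord k).count lβ = k := by
  simp [commWord, List.count_replicate, lα, lβ, lαinv, lβinv]

theorem mk_commWord (k : ℕ) : FreeGroup.mk (commWord k) = ⁅Wα ^ k, Wβ ^ k⁆ := by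
  simp only [commWord, ← FreeGroup.mul_mk, FreeGroup.mk_replicate, commutatorElement_def,
    ← inv_pow]
  rfl

theorem exists_rotate_eq_commWord (w : Word)
    (hX : walkX (cyclicLetter w) w.length = 0) (hY : walkY (cyclicLetter w) w.length = 0)
    (harea : 16 * walkArea (cyclicLetter w) w.length = (w.length : ℤ) ^ 2) :
    ∃ k r, w.length = 4 * k ∧ w.rotate r = commWord k := by
  rcases Nat.eq_zero_or_pos w.length with hn | hn
  · exact ⟨0, 0, hn, by simp [List.length_eq_zero_iff.1 hn, commWord]⟩
  have hl := periodic_cyclicLetter w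
  obtain ⟨k, x₀, y₀, hnk, hW⟩ := boundaryWalk_of_area_eq hl hn hX hY harea
  obtain ⟨r, hXr, hYr⟩ :=
    hW.exists_corner (by omega) hn (periodic_walkX hl hX) (periodic_walkY hl hY)
  have hcorner := hW.shift r
  rw [hXr, hYr, sub_self, sub_self] at hcorner
  refine ⟨k, r, hnk, List.ext_getElem (by simp [hnk, length_commWord]) fun u hu _ => ?_⟩
  rw [List.getElem_rotate, getElem_commWord, ← hcorner.eq_commLetter (by simp at hu; omega),
    cyclicLetter, add_comm r u, List.getD_eq_getElem]

/-- if a word `g` of length `n` with `a(g) = b(g) = 0` has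
`ν(g) = (n/4)²` (i.e. `16 ν(g) = n²`), then `n_α = n_β = n/4` and `g` is conjugate in
`F` to the commutator `⁅α^{n/4}, β^{n/4}⁆`. -/
theorem statement_13 (w : Word) (ha : aF (FreeGroup.mk w) = 0) (hb : bF (FreeGroup.mk w) = 0)
    (hν : 16 * νF (FreeGroup.mk w) = (w.length : ℤ) ^ 2) :
    4 * w.count lα = w.length ∧ 4 * w.count lβ = w.length ∧
    IsConj (⁅Wα ^ (w.length / 4), Wβ ^ (w.length / 4)⁆ : F) (FreeGroup.mk w) := by
  rw [aF, aH, mat_mk] at ha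
  rw [bF, bH, mat_mk] at hb
  rw [νF, νH, aH, bH, mat_mk] at hν
  have hX : walkX (cyclicLetter w) w.length = 0 := by simpa [Mmat] using ha
  have hY : walkY (cyclicLetter w) w.length = 0 := by simpa [Mmat] using hb
  have harea : 16 * walkArea (cyclicLetter w) w.length = (w.length : ℤ) ^ 2 := by
    simpa [Mmat, hX, hY] using hν
  obtain ⟨k, r, hnk, hrot⟩ := exists_rotate_eq_commWord w hX hY harea
  have hcount (x : Letter) : w.count x = (commWord k).count x := by
    rw [← hrot, (List.rotate_perm w r).count_eq]
  refine ⟨?_, ?_, ?_⟩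
  · rw [hcount, count_lα_commWord, hnk]
  · rw [hcount, count_lβ_commWord, hnk]
  · rw [show w.length / 4 = k by omega, ← mk_commWord, ← hrot]
    exact FreeGroup.isConj_mk_rotate w r

end
end
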